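/- arXiv:1201.1969 — 2 statements merged into one kernel-verified Lean document; each statement's English description precedes it below -/
import Mathlib

section
/- Let s_1, …, s_m be nonzero elements of A, and let h be a nonzero weighted-homogeneous element of A lying in the ideal generated by the leading forms L(s_1), …, L(s_m). Then there exists an element s of the ideal generated by s_1, …, s_m whose leading form equals h; in particular the weighted total degree of s equals that of h. -/
open MvPolynomial

/-!
Write `h = ∑ aᵢ L(sᵢ)` and replace each `aᵢ` by its weighted-homogeneous component `bᵢ` of
degree `deg h - deg sᵢ` (by `0` when `deg sᵢ > deg h`). Then `s = ∑ bᵢ sᵢ` has weighted degree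
at most `deg h`, and its component of degree `deg h` is `∑ bᵢ L(sᵢ)`, which is also the
degree-`deg h` component of `∑ aᵢ L(sᵢ) = h`, i.e. `h` itself. As `h ≠ 0`, this component is the
leading form of `s`.
-/

/-- The leading form of a polynomial `p` in the weighted-graded polynomial ring: its
weighted-homogeneous component of degree equal to its weighted total degree. -/
noncomputable def leadForm {k : Type*} [CommRing k] {σ : Type*} (w : σ → ℕ)
    (p : MvPolynomial σ k) : MvPolynomial σ k :=
  weightedHomogeneousComponent w (weightedTotalDegree w p) p

namespace MvPolynomial

variable {R σ : Type*} {w : σ → ℕ}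

section CommSemiring

variable [CommSemiring R]

attribute [local instance] weightedGradedAlgebra in
theorem IsWeightedHomogeneous.weightedHomogeneousComponent_mul_left {q : MvPolynomial σ R}
    {d : ℕ} (hq : q.IsWeightedHomogeneous w d) (a : MvPolynomial σ R) (n : ℕ) :
    weightedHomogeneousComponent w n (q * a) =
      if d ≤ n then q * weightedHomogeneousComponent w (n - d) a else 0 := by
  have hmem : q ∈ weightedHomogeneousSubmodule R w d := hq
  simp_rw [← weightedDecomposition.decompose'_apply]
  split_ifs with hd
  · exact DirectSum.coe_decompose_mul_of_left_mem_of_le _ hmem hd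
  · exact DirectSum.coe_decompose_mul_of_left_mem_of_not_le _ hmem hd

theorem IsWeightedHomogeneous.weightedHomogeneousComponent_mul_right {q : MvPolynomial σ R}
    {d : ℕ} (hq : q.IsWeightedHomogeneous w d) (a : MvPolynomial σ R) (n : ℕ) :
    weightedHomogeneousComponent w n (a * q) =
      if d ≤ n then weightedHomogeneousComponent w (n - d) a * q else 0 := by
  rw [mul_comm, hq.weightedHomogeneousComponent_mul_left, mul_comm]

theorem IsWeightedHomogeneous.weightedTotalDegree_le {p : MvPolynomial σ R} {d : ℕ}
    (hp : p.IsWeightedHomogeneous w d) : weightedTotalDegree w p ≤ d :=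
  Finset.sup_le fun _ hμ => (hp (mem_support_iff.mp hμ)).le

theorem weightedTotalDegree_mul_le (p q : MvPolynomial σ R) :
    weightedTotalDegree w (p * q) ≤ weightedTotalDegree w p + weightedTotalDegree w q := by
  classical
  refine Finset.sup_le fun μ hμ => ?_
  obtain ⟨x, hx, y, hy, rfl⟩ := Finset.mem_add.mp (support_mul p q hμ)
  rw [map_add]
  exact add_le_add (le_weightedTotalDegree w hx) (le_weightedTotalDegree w hy)

theorem weightedTotalDegree_sum_le {ι : Type*} (t : Finset ι) (f : ι → MvPolynomial σ R) {d : ℕ}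
    (hf : ∀ i ∈ t, weightedTotalDegree w (f i) ≤ d) :
    weightedTotalDegree w (∑ i ∈ t, f i) ≤ d := by
  classical
  refine Finset.sup_le fun μ hμ => ?_
  obtain ⟨i, hi, hμi⟩ := Finset.mem_biUnion.mp (support_sum hμ)
  exact (le_weightedTotalDegree w hμi).trans (hf i hi)

theorem weightedTotalDegree_eq_of_le_of_weightedHomogeneousComponent_ne_zero
    {p : MvPolynomial σ R} {d : ℕ} (hle : weightedTotalDegree w p ≤ d)
    (hne : weightedHomogeneousComponent w d p ≠ 0) : weightedTotalDegree w p = d :=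
  hle.antisymm <| not_lt.mp fun hlt => hne <| weightedHomogeneousComponent_eq_zero _ _ hlt

theorem IsWeightedHomogeneous.weightedTotalDegree_eq {p : MvPolynomial σ R} {d : ℕ}
    (hp : p.IsWeightedHomogeneous w d) (hne : p ≠ 0) : weightedTotalDegree w p = d :=
  weightedTotalDegree_eq_of_le_of_weightedHomogeneousComponent_ne_zero hp.weightedTotalDegree_le
    (by rwa [hp.weightedHomogeneousComponent_same])

end CommSemiring

section CommRing

variable [CommRing R]

theorem leadForm_eq_of_weightedTotalDegree_le {p : MvPolynomial σ R} {d : ℕ}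
    (hle : weightedTotalDegree w p ≤ d) (hne : weightedHomogeneousComponent w d p ≠ 0) :
    leadForm w p = weightedHomogeneousComponent w d p := by
  rw [leadForm, weightedTotalDegree_eq_of_le_of_weightedHomogeneousComponent_ne_zero hle hne]

theorem exists_weightedTotalDegree_mul_le_and_weightedHomogeneousComponent_mul_eq
    (a p : MvPolynomial σ R) (d : ℕ) :
    ∃ b, weightedTotalDegree w (b * p) ≤ d ∧
      weightedHomogeneousComponent w d (b * p) =
        weightedHomogeneousComponent w d (a * leadForm w p) := by
  set D := weightedTotalDegree w p
  have hL : (leadForm w p).IsWeightedHomogeneous w D :=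
    weightedHomogeneousComponent_isWeightedHomogeneous _ _
  by_cases hD : D ≤ d
  · set b := weightedHomogeneousComponent w (d - D) a
    have hb : b.IsWeightedHomogeneous w (d - D) :=
      weightedHomogeneousComponent_isWeightedHomogeneous _ _
    refine ⟨b, ?_, ?_⟩
    · calc weightedTotalDegree w (b * p) ≤ weightedTotalDegree w b + D :=
            weightedTotalDegree_mul_le b p
        _ ≤ d - D + D := by gcongr; exact hb.weightedTotalDegree_le
        _ = d := Nat.sub_add_cancel hD
    · rw [hb.weightedHomogeneousComponent_mul_left, hL.weightedHomogeneousComponent_mul_right,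
        if_pos (Nat.sub_le d D), if_pos hD, Nat.sub_sub_self hD]
      rfl
  · refine ⟨0, by simp [weightedTotalDegree_zero], ?_⟩
    rw [hL.weightedHomogeneousComponent_mul_right, if_neg hD, zero_mul, map_zero]

theorem exists_mem_span_weightedTotalDegree_le_and_weightedHomogeneousComponent_eq
    {ι : Type*} [Fintype ι] (s : ι → MvPolynomial σ R) {x : MvPolynomial σ R}
    (hx : x ∈ Ideal.span (Set.range fun i => leadForm w (s i))) (d : ℕ) :
    ∃ y ∈ Ideal.span (Set.range s), weightedTotalDegree w y ≤ d ∧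
      weightedHomogeneousComponent w d y = weightedHomogeneousComponent w d x := by
  obtain ⟨a, rfl⟩ := (Submodule.mem_span_range_iff_exists_fun _).mp hx
  choose b hb_deg hb_comp using fun i =>
    exists_weightedTotalDegree_mul_le_and_weightedHomogeneousComponent_mul_eq (w := w)
      (a i) (s i) d
  refine ⟨∑ i, b i * s i, ?_, ?_, ?_⟩
  · exact Ideal.sum_mem _ fun i _ => Ideal.mul_mem_left _ _ (Ideal.subset_span ⟨i, rfl⟩)
  · exact weightedTotalDegree_sum_le _ _ fun i _ => hb_deg i
  · simp only [map_sum, smul_eq_mul, hb_comp]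

end CommRing

end MvPolynomial

theorem stmt7_general {k : Type*} [CommRing k] {σ : Type*} (w : σ → ℕ)
    (m : ℕ) (s : Fin m → MvPolynomial σ k)
    (h : MvPolynomial σ k) (hh : h ≠ 0) (dh : ℕ) (hhom : h.IsWeightedHomogeneous w dh)
    (hmem : h ∈ Ideal.span (Set.range fun i => leadForm w (s i))) :
    ∃ s' ∈ Ideal.span (Set.range s),
      leadForm w s' = h ∧ weightedTotalDegree w s' = weightedTotalDegree w h := by
  obtain ⟨s', hs', hdeg, hcomp⟩ :=
    exists_mem_span_weightedTotalDegree_le_and_weightedHomogeneousComponent_eq s hmem dh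
  rw [hhom.weightedHomogeneousComponent_same] at hcomp
  have hne : weightedHomogeneousComponent w dh s' ≠ 0 := hcomp ▸ hh
  refine ⟨s', hs', ?_, ?_⟩
  · rw [leadForm_eq_of_weightedTotalDegree_le hdeg hne, hcomp]
  · rw [weightedTotalDegree_eq_of_le_of_weightedHomogeneousComponent_ne_zero hdeg hne,
      hhom.weightedTotalDegree_eq hh]

/-- if `s_1, …, s_m` are nonzero and `h` is a nonzero weighted-homogeneous
element of the ideal generated by the leading forms `L(s_1), …, L(s_m)`, then the ideal
`(s_1, …, s_m)` contains an element `s` with leading form exactly `h`; in particular the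
weighted total degree of `s` equals that of `h`. -/
theorem stmt7 {k : Type*} [CommRing k] {σ : Type*} [Fintype σ] (w : σ → ℕ)
    (hw : ∀ x, 1 ≤ w x) (m : ℕ) (s : Fin m → MvPolynomial σ k) (hs : ∀ i, s i ≠ 0)
    (h : MvPolynomial σ k) (hh : h ≠ 0) (dh : ℕ) (hhom : h.IsWeightedHomogeneous w dh)
    (hmem : h ∈ Ideal.span (Set.range fun i => leadForm w (s i))) :
    ∃ s' ∈ Ideal.span (Set.range s),
      leadForm w s' = h ∧ weightedTotalDegree w s' = weightedTotalDegree w h :=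
  stmt7_general w m s h hh dh hhom hmem
end

section
/- Let s_1, …, s_m be nonzero elements of A. If the quotient ring A/(L(s_1), …, L(s_m)) by the ideal generated by the leading forms is a finite-dimensional k-vector space, then the quotient ring A/(s_1, …, s_m) by the ideal generated by the s_i themselves is also a finite-dimensional k-vector space. -/
/-!
The ideal `I` generated by the leading forms is weighted-homogeneous, and `A ⧸ I` is
finite-dimensional, hence integral over `k`. The top-weight component of an integral equation
for a variable `x` over `A ⧸ I` is a power of `x`, so some `x ^ N` lies in `I`; hence `I` contains
every monomial of large weight, and so `L(p) ∈ I` whenever the weighted degree of `p` is large.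
For such `p` write `L(p) = ∑ cᵢ L(sᵢ)` with each `cᵢ` homogeneous of the complementary weight:
then `p - ∑ cᵢ sᵢ` has smaller weighted degree. Descending, every polynomial is congruent modulo
`(s₁, …, sₘ)` to one of bounded weighted degree, and as all weights are positive these span a
finite-dimensional space.
-/

open MvPolynomial

open Finsupp

attribute [local instance] MvPolynomial.weightedGradedAlgebra

namespace MvPolynomial

variable {R σ ι : Type*} [CommRing R] (w : σ → ℕ)

theorem weightedHomogeneousComponent_mul_of_isWeightedHomogeneous {c g : MvPolynomial σ R}
    {e : ℕ} (hg : g.IsWeightedHomogeneous w e) (n : ℕ) :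
    weightedHomogeneousComponent w n (c * g) =
      if e ≤ n then weightedHomogeneousComponent w (n - e) c * g else 0 := by
  simp_rw [← weightedDecomposition.decompose'_apply]
  exact DirectSum.coe_decompose_mul_of_right_mem _ n hg

theorem exists_sum_mul_eq_of_isWeightedHomogeneous_mem_span [Fintype ι] {g : ι → MvPolynomial σ R}
    {d : ι → ℕ} (hg : ∀ i, (g i).IsWeightedHomogeneous w (d i)) {f : MvPolynomial σ R} {e : ℕ}
    (hf : f.IsWeightedHomogeneous w e) (hmem : f ∈ Ideal.span (Set.range g)) :
    ∃ c : ι → MvPolynomial σ R,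
      -- i.e. `c i` is homogeneous of weight `e - d i`, and `c i = 0` if `e < d i`
      (∀ i, ∀ α ∈ (c i).support, weight w α + d i = e) ∧ f = ∑ i, c i * g i := by
  classical
  obtain ⟨c, rfl⟩ := Ideal.mem_span_range_iff_exists_fun.mp hmem
  refine ⟨fun i => if d i ≤ e then weightedHomogeneousComponent w (e - d i) (c i) else 0,
    fun i α hα => ?_, ?_⟩
  · dsimp only at hα
    split_ifs at hα with hi
    · have := weightedHomogeneousComponent_isWeightedHomogeneous (w := w) (e - d i) (c i)
        (mem_support_iff.mp hα)
      omega
    · simp at hα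
  · conv_lhs => rw [← hf.weightedHomogeneousComponent_same, map_sum]
    refine Finset.sum_congr rfl fun i _ => ?_
    rw [weightedHomogeneousComponent_mul_of_isWeightedHomogeneous w (hg i), ite_mul, zero_mul]

theorem isWeightedHomogeneous_leadForm (p : MvPolynomial σ R) :
    (leadForm w p).IsWeightedHomogeneous w (weightedTotalDegree w p) :=
  weightedHomogeneousComponent_isWeightedHomogeneous _ _

theorem mem_restrictSupport_weight_le_iff {p : MvPolynomial σ R} {d : ℕ} :
    p ∈ restrictSupport R {μ | weight w μ ≤ d} ↔ weightedTotalDegree w p ≤ d := by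
  rw [mem_restrictSupport_iff, weightedTotalDegree, Finset.sup_le_iff]
  rfl

theorem sub_leadForm_mem_restrictSupport (p : MvPolynomial σ R) :
    p - leadForm w p ∈ restrictSupport R {μ | weight w μ < weightedTotalDegree w p} := by
  classical
  rw [mem_restrictSupport_iff]
  intro μ hμ
  rw [Finset.mem_coe, mem_support_iff, coeff_sub, leadForm,
    coeff_weightedHomogeneousComponent] at hμ
  split_ifs at hμ with h
  · exact absurd (sub_self _) hμ
  · rw [sub_zero] at hμ
    exact lt_of_le_of_ne (le_weightedTotalDegree w (mem_support_iff.mpr hμ)) h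

theorem mul_mem_restrictSupport_weight_lt {c q : MvPolynomial σ R} {d e : ℕ}
    (hc : ∀ α ∈ c.support, weight w α + d = e)
    (hq : q ∈ restrictSupport R {μ | weight w μ < d}) :
    c * q ∈ restrictSupport R {μ | weight w μ < e} := by
  classical
  rw [mem_restrictSupport_iff] at hq ⊢
  intro ν hν
  obtain ⟨α, hα, β, hβ, rfl⟩ := Finset.mem_add.mp (support_mul c q hν)
  have hαw := hc α hα
  have hβw : weight w β < d := hq hβ
  rw [Set.mem_ofPred_eq, map_add]
  omega

theorem exists_sub_mem_restrictSupport_of_leadForm_mem_span [Fintype ι]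
    {s : ι → MvPolynomial σ R} {p : MvPolynomial σ R}
    (hp : leadForm w p ∈ Ideal.span (Set.range fun i => leadForm w (s i))) :
    ∃ r ∈ Ideal.span (Set.range s),
      p - r ∈ restrictSupport R {μ | weight w μ < weightedTotalDegree w p} := by
  obtain ⟨c, hc, hsum⟩ := exists_sum_mul_eq_of_isWeightedHomogeneous_mem_span w
    (fun i => isWeightedHomogeneous_leadForm w (s i)) (isWeightedHomogeneous_leadForm w p) hp
  refine ⟨∑ i, c i * s i,
    Ideal.sum_mem _ fun i _ => Ideal.mul_mem_left _ _ (Ideal.subset_span ⟨i, rfl⟩), ?_⟩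
  have hsplit : p - ∑ i, c i * s i =
      (p - leadForm w p) - ∑ i, c i * (s i - leadForm w (s i)) := by
    rw [hsum]
    simp only [mul_sub, Finset.sum_sub_distrib]
    ring
  rw [hsplit]
  exact Submodule.sub_mem _ (sub_leadForm_mem_restrictSupport w p) <| Submodule.sum_mem _
    fun i _ => mul_mem_restrictSupport_weight_lt w (hc i) (sub_leadForm_mem_restrictSupport w (s i))

theorem weightedHomogeneousComponent_aeval_of_monic {y : MvPolynomial σ R} {d : ℕ}
    (hy : y.IsWeightedHomogeneous w d) (hd : d ≠ 0) {f : Polynomial R} (hf : f.Monic) :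
    weightedHomogeneousComponent w (f.natDegree * d) (Polynomial.aeval y f) = y ^ f.natDegree := by
  classical
  rw [Polynomial.aeval_eq_sum_range, map_sum]
  have hterm : ∀ i, weightedHomogeneousComponent w (f.natDegree * d) (f.coeff i • y ^ i) =
      if i = f.natDegree then f.coeff i • y ^ i else 0 := by
    intro i
    rw [map_smul, weightedHomogeneousComponent_of_mem (hy.pow i)]
    by_cases hi : i = f.natDegree
    · simp [hi]
    · rw [if_neg, if_neg hi, smul_zero]
      rw [smul_eq_mul, eq_comm]
      exact fun h => hi (Nat.eq_of_mul_eq_mul_right (Nat.pos_of_ne_zero hd) h)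
  simp_rw [hterm]
  rw [Finset.sum_ite_eq', if_pos (Finset.self_mem_range_succ _), hf.coeff_natDegree, one_smul]

theorem exists_pow_mem_of_isHomogeneous {I : Ideal (MvPolynomial σ R)}
    (hI : I.IsHomogeneous (weightedHomogeneousSubmodule R w))
    [Algebra.IsIntegral R (MvPolynomial σ R ⧸ I)] {y : MvPolynomial σ R} {d : ℕ}
    (hy : y.IsWeightedHomogeneous w d) (hd : d ≠ 0) : ∃ n, y ^ n ∈ I := by
  obtain ⟨f, hf, hfy⟩ := Algebra.IsIntegral.isIntegral (R := R) (Ideal.Quotient.mk I y)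
  have hfI : Polynomial.aeval y f ∈ I := by
    rw [← Ideal.Quotient.eq_zero_iff_mem, ← Ideal.Quotient.mkₐ_eq_mk R,
      ← Polynomial.aeval_algHom_apply]
    exact hfy
  exact ⟨f.natDegree, weightedHomogeneousComponent_aeval_of_monic w hy hd hf ▸
    weightedHomogeneousComponent_mem_of_mem R w hI hfI _⟩

theorem monomial_mem_of_X_pow_mem [Fintype σ] {I : Ideal (MvPolynomial σ R)} {N : σ → ℕ}
    (hN : ∀ x, X x ^ N x ∈ I) {μ : σ →₀ ℕ} (hμ : ∑ x, N x * w x < weight w μ) (r : R) :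
    monomial μ r ∈ I := by
  obtain ⟨x, hx⟩ : ∃ x, N x ≤ μ x := by
    by_contra! h
    rw [weight_eq_sum] at hμ
    exact hμ.not_ge (Finset.sum_le_sum fun x _ => Nat.mul_le_mul_right (w x) (h x).le)
  have hsplit : monomial μ r = monomial (μ - single x (N x)) r * X x ^ N x := by
    rw [X_pow_eq_monomial, monomial_mul, mul_one, tsub_add_cancel_of_le (single_le_iff.mpr hx)]
  rw [hsplit]
  exact I.mul_mem_left _ (hN x)

theorem leadForm_mem_of_X_pow_mem [Fintype σ] {I : Ideal (MvPolynomial σ R)} {N : σ → ℕ}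
    (hN : ∀ x, X x ^ N x ∈ I) {p : MvPolynomial σ R}
    (hp : ∑ x, N x * w x < weightedTotalDegree w p) : leadForm w p ∈ I := by
  rw [← support_sum_monomial_coeff (leadForm w p)]
  refine Ideal.sum_mem _ fun μ hμ => monomial_mem_of_X_pow_mem w hN ?_ _
  rwa [isWeightedHomogeneous_leadForm w p (mem_support_iff.mp hμ)]

theorem restrictSupport_weight_le_le_sup_span [Fintype ι] {s : ι → MvPolynomial σ R} {D : ℕ}
    (hL : ∀ p, D < weightedTotalDegree w p →
      leadForm w p ∈ Ideal.span (Set.range fun i => leadForm w (s i))) (d : ℕ) :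
    restrictSupport R {μ | weight w μ ≤ d} ≤
      restrictSupport R {μ | weight w μ ≤ D} ⊔ (Ideal.span (Set.range s)).restrictScalars R := by
  induction d with
  | zero => exact le_sup_of_le_left (restrictSupport_mono R fun μ hμ => le_trans hμ D.zero_le)
  | succ d ih =>
    intro p hp
    rw [mem_restrictSupport_weight_le_iff] at hp
    by_cases hd : weightedTotalDegree w p ≤ d
    · exact ih ((mem_restrictSupport_weight_le_iff w).mpr hd)
    by_cases hD : weightedTotalDegree w p ≤ D
    · exact Submodule.mem_sup_left ((mem_restrictSupport_weight_le_iff w).mpr hD)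
    obtain ⟨r, hr, hpr⟩ := exists_sub_mem_restrictSupport_of_leadForm_mem_span w (hL p (by omega))
    have hpr' : p - r ∈ restrictSupport R {μ | weight w μ ≤ d} :=
      restrictSupport_mono R (fun μ hμ => by rw [Set.mem_ofPred_eq] at hμ ⊢; omega) hpr
    rw [← sub_add_cancel p r]
    exact Submodule.add_mem _ (ih hpr') (Submodule.mem_sup_right hr)

theorem module_finite_quotient_span_of_leadForm_mem [Finite σ] [Fintype ι] (hw : ∀ x, w x ≠ 0)
    {s : ι → MvPolynomial σ R} (D : ℕ) (hL : ∀ p, D < weightedTotalDegree w p →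
      leadForm w p ∈ Ideal.span (Set.range fun i => leadForm w (s i))) :
    Module.Finite R (MvPolynomial σ R ⧸ Ideal.span (Set.range s)) := by
  have : Finite {μ : σ →₀ ℕ | weight w μ ≤ D} := (finite_of_nat_weight_le w hw D).to_subtype
  have : Module.Finite R (restrictSupport R {μ : σ →₀ ℕ | weight w μ ≤ D}) :=
    Module.Finite.of_basis (basisRestrictSupport R _)
  refine Module.Finite.of_surjective
    ((Ideal.Quotient.mkₐ R _).toLinearMap ∘ₗ
      (restrictSupport R {μ : σ →₀ ℕ | weight w μ ≤ D}).subtype) fun z => ?_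
  obtain ⟨p, rfl⟩ := Ideal.Quotient.mk_surjective z
  obtain ⟨q, hq, r, hr, rfl⟩ := Submodule.mem_sup.mp <| restrictSupport_weight_le_le_sup_span w hL
    _ ((mem_restrictSupport_weight_le_iff w (p := p)).mpr le_rfl)
  refine ⟨⟨q, hq⟩, ?_⟩
  simp [Ideal.Quotient.eq_zero_iff_mem.mpr hr]

end MvPolynomial

theorem stmt8_general {k : Type*} [Field k] {σ : Type*} [Fintype σ] (w : σ → ℕ)
    (hw : ∀ x, 1 ≤ w x) (m : ℕ) (s : Fin m → MvPolynomial σ k)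
    (hfin : FiniteDimensional k
      (MvPolynomial σ k ⧸ Ideal.span (Set.range fun i => leadForm w (s i)))) :
    FiniteDimensional k (MvPolynomial σ k ⧸ Ideal.span (Set.range s)) := by
  have hI : (Ideal.span (Set.range fun i => leadForm w (s i))).IsHomogeneous
      (weightedHomogeneousSubmodule k w) :=
    Ideal.homogeneous_span _ _ <| by
      rintro _ ⟨i, rfl⟩
      exact ⟨_, weightedHomogeneousComponent_mem w (s i) _⟩
  have hw' : ∀ x, w x ≠ 0 := fun x => Nat.one_le_iff_ne_zero.mp (hw x)
  choose N hN using fun x =>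
    exists_pow_mem_of_isHomogeneous w hI (isWeightedHomogeneous_X k w x) (hw' x)
  exact module_finite_quotient_span_of_leadForm_mem w hw' _
    fun p hp => leadForm_mem_of_X_pow_mem w hN hp

/-- if `s_1, …, s_m` are nonzero and `A/(L(s_1), …, L(s_m))` is a
finite-dimensional `k`-vector space, then so is `A/(s_1, …, s_m)`. -/
theorem stmt8 {k : Type*} [Field k] {σ : Type*} [Fintype σ] (w : σ → ℕ)
    (hw : ∀ x, 1 ≤ w x) (m : ℕ) (s : Fin m → MvPolynomial σ k) (hs : ∀ i, s i ≠ 0)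
    (hfin : FiniteDimensional k
      (MvPolynomial σ k ⧸ Ideal.span (Set.range fun i => leadForm w (s i)))) :
    FiniteDimensional k (MvPolynomial σ k ⧸ Ideal.span (Set.range s)) :=
  stmt8_general w hw m s hfin
end
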